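/- arXiv:2207.08892 — 2 statements merged into one kernel-verified Lean document; each statement's English description precedes it below -/
import Mathlib

section
/- In the discrete-time optimal control setup, the reduced cost Φ is differentiable on (ℝᵐ)^T, and for every control sequence u = (u_0,…,u_{T−1}) and every t ∈ {0,…,T−1}, the partial gradient of Φ with respect to the block variable u_t equals ∇_u c_t(x_t(u), u_t) + (D_u f_t(x_t(u), u_t))ᵀ λ_{t+1}(u), where λ(u) is the costate sequence of u and D_u f_t denotes the Jacobian of f_t in its control argument. (This identifies the correction term Δu_t of the distributed shooting algorithm with the exact gradient of the robot's reduced objective.) -/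
/-!
Fix the controls and let `V s` be the cost-to-go of stages `s, …, T - 1` as a function of the
state at stage `s`, so `V s y = c s y (u s) + V (s + 1) (f s y (u s))` and `V T = h`. Changing only
the control at stage `t` leaves the earlier states and costs alone, so near `u t` the reduced cost
is `const + c t (x t) v + V (t + 1) (f t (x t) v)`, and the chain rule gives the block gradient
`∇ᵥ c t + (Dᵥ f t)ᵀ ∇V (t + 1) (x (t + 1))`. Differentiating the Bellman recursion along the
rollout shows that `∇V s (x s)` obeys the costate recursion, hence equals `λ s`.
-/

open InnerProductSpace ContinuousLinearMap Finset

section Gradient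

variable {𝕜 E F : Type*} [RCLike 𝕜] [NormedAddCommGroup E] [InnerProductSpace 𝕜 E] [CompleteSpace E]
  [NormedAddCommGroup F] [InnerProductSpace 𝕜 F] [CompleteSpace F] {f g : E → 𝕜} {f' g' x : E}

theorem HasGradientAt.add (hf : HasGradientAt f f' x) (hg : HasGradientAt g g' x) :
    HasGradientAt (fun y => f y + g y) (f' + g') x := by
  rw [hasGradientAt_iff_hasFDerivAt] at *
  rw [map_add]
  exact hf.add hg

theorem HasGradientAt.const_add (a : 𝕜) (hf : HasGradientAt f f' x) :
    HasGradientAt (fun y => a + f y) f' x := by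
  rw [hasGradientAt_iff_hasFDerivAt] at *
  exact hf.const_add a

theorem HasGradientAt.comp_hasFDerivAt {g : F → 𝕜} {g' : F} {φ : E → F} {φ' : E →L[𝕜] F}
    (hg : HasGradientAt g g' (φ x)) (hφ : HasFDerivAt φ φ' x) :
    HasGradientAt (fun y => g (φ y)) (adjoint φ' g') x := by
  rw [hasGradientAt_iff_hasFDerivAt] at *
  have hdual : toDual 𝕜 E (adjoint φ' g') = (toDual 𝕜 F g').comp φ' := by
    ext v
    simp [adjoint_inner_left]
  rw [hdual]
  exact hg.comp x hφ

end Gradient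

section Partial

variable {𝕜 E F G : Type*} [NontriviallyNormedField 𝕜] [NormedAddCommGroup E] [NormedSpace 𝕜 E]
  [NormedAddCommGroup F] [NormedSpace 𝕜 F] [NormedAddCommGroup G] [NormedSpace 𝕜 G] {φ : E → F → G}

theorem Differentiable.curry_left (hφ : Differentiable 𝕜 fun p : E × F => φ p.1 p.2) (b : F) :
    Differentiable 𝕜 fun a => φ a b :=
  hφ.comp (differentiable_id.prodMk (differentiable_const b))

theorem Differentiable.curry_right (hφ : Differentiable 𝕜 fun p : E × F => φ p.1 p.2) (a : E) :
    Differentiable 𝕜 (φ a) :=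
  hφ.comp ((differentiable_const a).prodMk differentiable_id)

end Partial

section Trajectory

variable {E U : Type*} (f : ℕ → E → U → E)

theorem trajectory_eq_of_controls_eq {y y' : ℕ → E} {w w' : ℕ → U} {t : ℕ} (h0 : y 0 = y' 0)
    (hy : ∀ r < t, y (r + 1) = f r (y r) (w r)) (hy' : ∀ r < t, y' (r + 1) = f r (y' r) (w' r))
    (hw : ∀ r < t, w r = w' r) : ∀ r ≤ t, y r = y' r := by
  intro r hr
  induction r with
  | zero => exact h0
  | succ r ih => rw [hy r hr, hy' r hr, ih (by omega), hw r hr]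

theorem differentiable_trajectory {𝕜 P : Type*} [NontriviallyNormedField 𝕜]
    [NormedAddCommGroup E] [NormedSpace 𝕜 E] [NormedAddCommGroup U] [NormedSpace 𝕜 U]
    [NormedAddCommGroup P] [NormedSpace 𝕜 P] {X : P → ℕ → E} {W : ℕ → P → U} {N : ℕ}
    (hX0 : Differentiable 𝕜 (fun p => X p 0)) (hX : ∀ p, ∀ r < N, X p (r + 1) = f r (X p r) (W r p))
    (hf : ∀ r < N, Differentiable 𝕜 (fun q : E × U => f r q.1 q.2))
    (hW : ∀ r < N, Differentiable 𝕜 (W r)) : ∀ s ≤ N, Differentiable 𝕜 (fun p => X p s) := by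
  intro s hs
  induction s with
  | zero => exact hX0
  | succ s ih =>
    simp only [hX _ s hs]
    exact (hf s hs).comp ((ih (by omega)).prodMk (hW s hs))

end Trajectory

section CostToGo

variable {E U : Type*} (f : ℕ → E → U → E) (c : ℕ → E → U → ℝ) (h : E → ℝ)

/-- `costToGo f c h w k s y`: the cost of the `k` stages `s, …, s + k - 1` under the controls `w`,
started in state `y` at stage `s`, plus the terminal cost. -/
def costToGo (w : ℕ → U) : ℕ → ℕ → E → ℝ
  | 0, _, y => h y
  | k + 1, s, y => c s y (w s) + costToGo w k (s + 1) (f s y (w s))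

variable {f c h} {w : ℕ → U} {y : ℕ → E}

theorem costToGo_congr {w' : ℕ → U} {s : ℕ} (hw : ∀ r ≥ s, w r = w' r) (k : ℕ) :
    costToGo f c h w k s = costToGo f c h w' k s := by
  induction k generalizing s with
  | zero => rfl
  | succ k ih =>
    funext z
    simp only [costToGo, hw s le_rfl, ih (s := s + 1) fun r hr => hw r (by omega)]

theorem costToGo_add_eq_sum {j s : ℕ} (hy : ∀ r, s ≤ r → r < s + j → y (r + 1) = f r (y r) (w r))
    (k : ℕ) :
    costToGo f c h w (j + k) s (y s) = ∑ i ∈ range j, c (s + i) (y (s + i)) (w (s + i))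
      + costToGo f c h w k (s + j) (y (s + j)) := by
  induction j generalizing s with
  | zero => simp
  | succ j ih =>
    rw [Nat.add_right_comm, costToGo, ← hy s le_rfl (by omega),
      ih fun r h1 h2 => hy r (by omega) (by omega), sum_range_succ']
    simp only [Nat.add_right_comm s 1, ← Nat.add_assoc, Nat.add_zero]
    ring

theorem costToGo_eq_sum {N : ℕ} (hy : ∀ r < N, y (r + 1) = f r (y r) (w r)) :
    costToGo f c h w N 0 (y 0) = ∑ i ∈ range N, c i (y i) (w i) + h (y N) := by
  simpa [costToGo] using costToGo_add_eq_sum (s := 0) (j := N) (fun r _ hr => hy r (by omega)) 0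

theorem costToGo_update {y' : ℕ → E} {t N : ℕ} {v : U} (ht : t < N) (h0 : y' 0 = y 0)
    (hy : ∀ r < t, y (r + 1) = f r (y r) (w r))
    (hy' : ∀ r < t, y' (r + 1) = f r (y' r) (Function.update w t v r)) :
    costToGo f c h (Function.update w t v) N 0 (y' 0)
      = ∑ i ∈ range t, c i (y i) (w i)
        + (c t (y t) v + costToGo f c h w (N - (t + 1)) (t + 1) (f t (y t) v)) := by
  have hagree := trajectory_eq_of_controls_eq f h0 hy' hy
    fun r hr => Function.update_of_ne (by omega) v w
  obtain ⟨k, rfl⟩ : ∃ k, N = t + (k + 1) := ⟨N - (t + 1), by omega⟩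
  rw [costToGo_add_eq_sum fun r _ hr => hy' r (by omega), show t + (k + 1) - (t + 1) = k by omega]
  have hlater : costToGo f c h (Function.update w t v) k (t + 1) = costToGo f c h w k (t + 1) :=
    costToGo_congr (fun r hr => Function.update_of_ne (show r ≠ t by omega) v w) k
  simp only [zero_add, costToGo, hagree t le_rfl, Function.update_self, hlater]
  congr 1
  refine sum_congr rfl fun i hi => ?_
  have hit : i < t := mem_range.mp hi
  rw [hagree i hit.le, Function.update_of_ne hit.ne]

variable [NormedAddCommGroup E] [InnerProductSpace ℝ E] [CompleteSpace E]

theorem hasGradientAt_costToGo {lam : ℕ → E} {s N : ℕ} (hsN : s ≤ N)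
    (hy : ∀ r, s ≤ r → r < N → y (r + 1) = f r (y r) (w r))
    (hc : ∀ r, s ≤ r → r < N → DifferentiableAt ℝ (fun z => c r z (w r)) (y r))
    (hf : ∀ r, s ≤ r → r < N → DifferentiableAt ℝ (fun z => f r z (w r)) (y r))
    (hh : DifferentiableAt ℝ h (y N))
    (hlam : ∀ r, s ≤ r → r < N → lam r = gradient (fun z => c r z (w r)) (y r)
      + adjoint (fderiv ℝ (fun z => f r z (w r)) (y r)) (lam (r + 1)))
    (hlamN : lam N = gradient h (y N)) :
    HasGradientAt (costToGo f c h w (N - s) s) (lam s) (y s) := by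
  obtain ⟨k, rfl⟩ := Nat.exists_eq_add_of_le hsN
  rw [Nat.add_sub_cancel_left]
  clear hsN
  induction k generalizing s with
  | zero =>
    rw [add_zero] at hh hlamN
    rw [hlamN]
    exact hh.hasGradientAt
  | succ k ih =>
    have hnext : HasGradientAt (costToGo f c h w k (s + 1)) (lam (s + 1)) (y (s + 1)) := by
      rw [show s + (k + 1) = s + 1 + k by omega] at hy hc hf hh hlam hlamN
      exact ih (fun r h1 => hy r (by omega)) (fun r h1 => hc r (by omega))
        (fun r h1 => hf r (by omega)) hh (fun r h1 => hlam r (by omega)) hlamN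
    rw [hy s le_rfl (by omega)] at hnext
    rw [hlam s le_rfl (by omega)]
    exact (hc s le_rfl (by omega)).hasGradientAt.add
      (hnext.comp_hasFDerivAt (φ := fun z => f s z (w s)) (hf s le_rfl (by omega)).hasFDerivAt)

end CostToGo

def extendByZero {T : ℕ} {U : Type*} [Zero U] (u : Fin T → U) (r : ℕ) : U :=
  if hr : r < T then u ⟨r, hr⟩ else 0

section ExtendByZero

variable {T : ℕ} {U : Type*} [Zero U]

@[simp] theorem extendByZero_of_lt (u : Fin T → U) {r : ℕ} (hr : r < T) :
    extendByZero u r = u ⟨r, hr⟩ :=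
  dif_pos hr

theorem extendByZero_update (u : Fin T → U) (t : Fin T) (v : U) :
    extendByZero (Function.update u t v) = Function.update (extendByZero u) t v := by
  funext r
  by_cases hr : r < T
  · rcases eq_or_ne r t with rfl | hrt
    · simp
    · simp [extendByZero, hr, hrt, Function.update_of_ne (Fin.ne_of_val_ne (i := ⟨r, hr⟩) hrt)]
  · simp [extendByZero, hr, show r ≠ t by omega]

theorem differentiable_extendByZero_apply {𝕜 : Type*} [NontriviallyNormedField 𝕜]
    {U : Type*} [NormedAddCommGroup U] [NormedSpace 𝕜 U] (r : ℕ) :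
    Differentiable 𝕜 (fun u : Fin T → U => extendByZero u r) := by
  by_cases hr : r < T
  · simpa [extendByZero, hr] using differentiable_apply (𝕜 := 𝕜) (⟨r, hr⟩ : Fin T)
  · simp [extendByZero, hr]

end ExtendByZero

theorem reduced_cost_block_gradient_general
    (n m T : ℕ)
    (f : ℕ → EuclideanSpace ℝ (Fin n) → EuclideanSpace ℝ (Fin m) → EuclideanSpace ℝ (Fin n))
    (c : ℕ → EuclideanSpace ℝ (Fin n) → EuclideanSpace ℝ (Fin m) → ℝ)
    (h : EuclideanSpace ℝ (Fin n) → ℝ)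
    (x0 : EuclideanSpace ℝ (Fin n))
    -- continuous differentiability of the data
    (hf : ∀ t < T, ContDiff ℝ 1
      (fun p : EuclideanSpace ℝ (Fin n) × EuclideanSpace ℝ (Fin m) => f t p.1 p.2))
    (hc : ∀ t < T, ContDiff ℝ 1
      (fun p : EuclideanSpace ℝ (Fin n) × EuclideanSpace ℝ (Fin m) => c t p.1 p.2))
    (hh : ContDiff ℝ 1 h)
    -- the rollout x(u)
    (x : (Fin T → EuclideanSpace ℝ (Fin m)) → ℕ → EuclideanSpace ℝ (Fin n))
    (hx0 : ∀ u, x u 0 = x0)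
    (hxrec : ∀ u, ∀ t : Fin T, x u ((t : ℕ) + 1) = f t (x u t) (u t))
    -- the reduced cost Φ
    (Φ : (Fin T → EuclideanSpace ℝ (Fin m)) → ℝ)
    (hΦ : ∀ u, Φ u = (∑ t : Fin T, c t (x u t) (u t)) + h (x u T))
    -- the costate sequence λ(u), defined backward
    (lam : (Fin T → EuclideanSpace ℝ (Fin m)) → ℕ → EuclideanSpace ℝ (Fin n))
    (hlamT : ∀ u, lam u T = gradient h (x u T))
    (hlamrec : ∀ u, ∀ t : Fin T, 1 ≤ (t : ℕ) →
      lam u t = gradient (fun y => c t y (u t)) (x u t)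
        + (ContinuousLinearMap.adjoint
            (fderiv ℝ (fun y => f t y (u t)) (x u t))) (lam u ((t : ℕ) + 1))) :
    Differentiable ℝ Φ ∧
      ∀ (u : Fin T → EuclideanSpace ℝ (Fin m)) (t : Fin T),
        gradient (fun v => Φ (Function.update u t v)) (u t)
          = gradient (fun v => c t (x u t) v) (u t)
            + (ContinuousLinearMap.adjoint
                (fderiv ℝ (fun v => f t (x u t) v) (u t))) (lam u ((t : ℕ) + 1)) := by
  have hfd := fun r (hr : r < T) => (hf r hr).differentiable one_ne_zero
  have hcd := fun r (hr : r < T) => (hc r hr).differentiable one_ne_zero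
  have hhd : Differentiable ℝ h := hh.differentiable one_ne_zero
  have hroll : ∀ u, ∀ r < T, x u (r + 1) = f r (x u r) (extendByZero u r) := fun u r hr => by
    rw [extendByZero_of_lt u hr]
    exact hxrec u ⟨r, hr⟩
  have hΦ_costToGo : ∀ u, Φ u = costToGo f c h (extendByZero u) T 0 (x u 0) := fun u => by
    rw [hΦ u, costToGo_eq_sum (hroll u), ← Fin.sum_univ_eq_sum_range]
    simp
  refine ⟨?_, fun u t => ?_⟩
  · have hxd := differentiable_trajectory f (by simp [hx0]) hroll hfd
      fun r _ => differentiable_extendByZero_apply r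
    rw [funext hΦ]
    exact (Differentiable.fun_sum fun (r : Fin T) _ => (hcd r r.2).comp
      ((hxd r r.2.le).prodMk (differentiable_apply r))).add (hhd.comp (hxd T le_rfl))
  set V := costToGo f c h (extendByZero u) (T - (t + 1)) (t + 1)
  have hblock : (fun v => Φ (Function.update u t v)) = fun v =>
      ∑ i ∈ range t, c i (x u i) (extendByZero u i) + (c t (x u t) v + V (f t (x u t) v)) := by
    funext v
    rw [hΦ_costToGo, extendByZero_update]
    exact costToGo_update t.2 (by rw [hx0, hx0]) (fun r hr => hroll u r (by omega))
      (fun r hr => by rw [← extendByZero_update]; exact hroll _ r (by omega))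
  have hV : HasGradientAt V (lam u (t + 1)) (x u (t + 1)) :=
    hasGradientAt_costToGo t.2 (fun r _ => hroll u r)
      (fun r _ hr => ((hcd r hr).curry_left _).differentiableAt)
      (fun r _ hr => ((hfd r hr).curry_left _).differentiableAt) hhd.differentiableAt
      (fun r htr hr => by
        rw [extendByZero_of_lt u hr]
        exact hlamrec u ⟨r, hr⟩ (le_of_add_le_right htr))
      (hlamT u)
  rw [hxrec u t] at hV
  rw [hblock]
  exact ((((hcd t t.2).curry_right _).differentiableAt.hasGradientAt.add
    (hV.comp_hasFDerivAt (φ := fun v => f t (x u t) v)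
      ((hfd t t.2).curry_right _).differentiableAt.hasFDerivAt)).const_add _).gradient

theorem reduced_cost_block_gradient
    (n m T : ℕ) (hT : 1 ≤ T)
    (f : ℕ → EuclideanSpace ℝ (Fin n) → EuclideanSpace ℝ (Fin m) → EuclideanSpace ℝ (Fin n))
    (c : ℕ → EuclideanSpace ℝ (Fin n) → EuclideanSpace ℝ (Fin m) → ℝ)
    (h : EuclideanSpace ℝ (Fin n) → ℝ)
    (x0 : EuclideanSpace ℝ (Fin n))
    -- continuous differentiability of the data
    (hf : ∀ t < T, ContDiff ℝ 1
      (fun p : EuclideanSpace ℝ (Fin n) × EuclideanSpace ℝ (Fin m) => f t p.1 p.2))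
    (hc : ∀ t < T, ContDiff ℝ 1
      (fun p : EuclideanSpace ℝ (Fin n) × EuclideanSpace ℝ (Fin m) => c t p.1 p.2))
    (hh : ContDiff ℝ 1 h)
    -- the rollout x(u)
    (x : (Fin T → EuclideanSpace ℝ (Fin m)) → ℕ → EuclideanSpace ℝ (Fin n))
    (hx0 : ∀ u, x u 0 = x0)
    (hxrec : ∀ u, ∀ t : Fin T, x u ((t : ℕ) + 1) = f t (x u t) (u t))
    -- the reduced cost Φ
    (Φ : (Fin T → EuclideanSpace ℝ (Fin m)) → ℝ)
    (hΦ : ∀ u, Φ u = (∑ t : Fin T, c t (x u t) (u t)) + h (x u T))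
    -- the costate sequence λ(u), defined backward
    (lam : (Fin T → EuclideanSpace ℝ (Fin m)) → ℕ → EuclideanSpace ℝ (Fin n))
    (hlamT : ∀ u, lam u T = gradient h (x u T))
    (hlamrec : ∀ u, ∀ t : Fin T, 1 ≤ (t : ℕ) →
      lam u t = gradient (fun y => c t y (u t)) (x u t)
        + (ContinuousLinearMap.adjoint
            (fderiv ℝ (fun y => f t y (u t)) (x u t))) (lam u ((t : ℕ) + 1))) :
    Differentiable ℝ Φ ∧
      ∀ (u : Fin T → EuclideanSpace ℝ (Fin m)) (t : Fin T),
        gradient (fun v => Φ (Function.update u t v)) (u t)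
          = gradient (fun v => c t (x u t) v) (u t)
            + (ContinuousLinearMap.adjoint
                (fderiv ℝ (fun v => f t (x u t) v) (u t))) (lam u ((t : ℕ) + 1)) :=
  reduced_cost_block_gradient_general n m T f c h x0 hf hc hh x hx0 hxrec Φ hΦ lam hlamT hlamrec
end

section
/- (Lemma 1, sufficiency.) In the dynamic game setup, let (ξ₁*,…,ξ_M*) be a profile of feasible trajectories, and suppose that for every robot i the reduced objective Φᵢ : (ℝ^{mᵢ})^T → ℝ, defined by mapping a control sequence uᵢ to Jᵢ(rollout of uᵢ, ξ*_{Nᵢ}) with the neighbors' trajectories held at their values in the profile, is a convex function. If for every robot i there exists a costate sequence λᵢ satisfying the PMP-G conditions (dynamics recursion, stationarity in uᵢ, costate recursion, and boundary condition λᵢ^T = ∇_{xᵢ} hᵢ) along ξᵢ*, then (ξ₁*,…,ξ_M*) is a Nash equilibrium. -/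
/-!
Fix the other robots at the profile: robot `i` then faces a single-agent control problem whose
reduced objective `Φᵢ` is convex in the controls, so it suffices that the derivative of `Φᵢ` at
`uᵢ*` in every direction `d = u - uᵢ*` vanishes. That derivative is a sum of first-order terms in
`d` and in the linearized state variation `δ` (with `δ⁰ = 0`). Pairing `δ` with the costates, the
stationarity and costate equations make the running terms telescope to `-⟪λᵀ, δᵀ⟫`, which the
boundary condition `λᵀ = ∇h` cancels against the terminal term.
-/

open Finset RealInnerProductSpace

def GameFeasible {X U : Type*} (T : ℕ) (x0 : X) (f : ℕ → X → U → X)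
    (x : ℕ → X) (u : ℕ → U) : Prop :=
  x 0 = x0 ∧ ∀ t < T, x (t + 1) = f t (x t) (u t)

theorem ConvexOn.le_of_hasDerivAt_lineMap_zero {E : Type*} [AddCommGroup E] [Module ℝ E]
    {J : E → ℝ} (hJ : ConvexOn ℝ Set.univ J) {a b : E}
    (hd : HasDerivAt (fun s : ℝ => J (AffineMap.lineMap a b s)) 0 0) : J a ≤ J b := by
  have hline : ConvexOn ℝ Set.univ (fun s : ℝ => J (AffineMap.lineMap a b s)) := by
    have := hJ.comp_affineMap (AffineMap.lineMap a b)
    rwa [Set.preimage_univ] at this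
  simpa [slope_def_field] using
    hline.le_slope_of_hasDerivAt (Set.mem_univ 0) (Set.mem_univ 1) zero_lt_one hd

section Trajectories

variable {X U : Type*} {T : ℕ} {x0 : X} {f : ℕ → X → U → X}

theorem GameFeasible.eq_of_le {x y : ℕ → X} {u : ℕ → U} (hx : GameFeasible T x0 f x u)
    (hy : GameFeasible T x0 f y u) : ∀ t ≤ T, x t = y t
  | 0, _ => hx.1.trans hy.1.symm
  | t + 1, ht => by rw [hx.2 t ht, hy.2 t ht, hx.eq_of_le hy t (Nat.le_of_succ_le ht)]

def trajectoryCost (T : ℕ) (ℓ : ℕ → X → U → ℝ) (φ : X → ℝ) (x : ℕ → X) (u : ℕ → U) : ℝ :=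
  ∑ t ∈ range T, ℓ t (x t) (u t) + φ (x T)

theorem GameFeasible.trajectoryCost_eq {x y : ℕ → X} {u : ℕ → U} (hx : GameFeasible T x0 f x u)
    (hy : GameFeasible T x0 f y u) (ℓ : ℕ → X → U → ℝ) (φ : X → ℝ) :
    trajectoryCost T ℓ φ x u = trajectoryCost T ℓ φ y u := by
  unfold trajectoryCost
  rw [hx.eq_of_le hy T le_rfl]
  congr 1
  exact sum_congr rfl fun t ht => by rw [hx.eq_of_le hy t (mem_range.1 ht).le]

end Trajectories

section Linearization

variable {X U Y : Type*} [NormedAddCommGroup X] [NormedSpace ℝ X] [NormedAddCommGroup U]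
  [NormedSpace ℝ U] [NormedAddCommGroup Y] [NormedSpace ℝ Y]

theorem DifferentiableAt.hasDerivAt_comp₂ {F : X → U → Y} {a : X} {b : U}
    (hF : DifferentiableAt ℝ (fun p : X × U => F p.1 p.2) (a, b)) {α : ℝ → X} {β : ℝ → U}
    {v : X} {w : U} {s : ℝ} (hα : HasDerivAt α v s) (hβ : HasDerivAt β w s) (ha : α s = a)
    (hb : β s = b) :
    HasDerivAt (fun r => F (α r) (β r))
      (fderiv ℝ (fun x => F x b) a v + fderiv ℝ (fun y => F a y) b w) s := by
  subst ha hb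
  set D := fderiv ℝ (fun p : X × U => F p.1 p.2) (α s, β s)
  have hD : HasFDerivAt (fun p : X × U => F p.1 p.2) D (α s, β s) := hF.hasFDerivAt
  have hx : HasFDerivAt (fun x => F x (β s)) (D.comp (ContinuousLinearMap.inl ℝ X U)) (α s) := by
    have := hD.comp (α s) (hasFDerivAt_prodMk_left (𝕜 := ℝ) (α s) (β s))
    exact this
  have hy : HasFDerivAt (fun y => F (α s) y) (D.comp (ContinuousLinearMap.inr ℝ X U)) (β s) := by
    have := hD.comp (β s) (hasFDerivAt_prodMk_right (𝕜 := ℝ) (α s) (β s))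
    exact this
  rw [hx.fderiv, hy.fderiv]
  refine (hD.comp_hasDerivAt s (hα.prodMk hβ)).congr_deriv ?_
  rw [ContinuousLinearMap.comp_apply, ContinuousLinearMap.comp_apply, ← map_add]
  simp

def linearizedRollout (A : ℕ → X →L[ℝ] X) (B : ℕ → U →L[ℝ] X) (d : ℕ → U) : ℕ → X
  | 0 => 0
  | t + 1 => A t (linearizedRollout A B d t) + B t (d t)

noncomputable def stateVariation (f : ℕ → X → U → X) (xs : ℕ → X) (us : ℕ → U) : (ℕ → U) → ℕ → X :=
  linearizedRollout (fun t => fderiv ℝ (fun x => f t x (us t)) (xs t))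
    (fun t => fderiv ℝ (fun v => f t (xs t) v) (us t))

theorem hasDerivAt_rollout {T : ℕ} {x0 : X} {f : ℕ → X → U → X} {z : ℝ → ℕ → X}
    {w : ℝ → ℕ → U} {d : ℕ → U} {s : ℝ} {xs : ℕ → X} {us : ℕ → U}
    (hz : ∀ r, GameFeasible T x0 f (z r) (w r)) (hzs : ∀ t ≤ T, z s t = xs t) (hws : w s = us)
    (hf : ∀ t < T, DifferentiableAt ℝ (fun p : X × U => f t p.1 p.2) (xs t, us t))
    (hw : ∀ t, HasDerivAt (fun r => w r t) (d t) s) :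
    ∀ t ≤ T, HasDerivAt (fun r => z r t) (stateVariation f xs us d t) s
  | 0, _ => by
    simp only [fun r => (hz r).1]
    exact hasDerivAt_const s x0
  | t + 1, ht => by
    have hzt := hasDerivAt_rollout hz hzs hws hf hw t (Nat.le_of_succ_le ht)
    simp only [fun r => (hz r).2 t ht]
    exact (hf t ht).hasDerivAt_comp₂ hzt (hw t) (hzs t (Nat.le_of_succ_le ht)) (congrFun hws t)

end Linearization

section Adjoint

variable {X U : Type*} [NormedAddCommGroup X] [InnerProductSpace ℝ X] [CompleteSpace X]
  [NormedAddCommGroup U] [InnerProductSpace ℝ U] [CompleteSpace U]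
  {T : ℕ} {x0 : X} {f : ℕ → X → U → X} {ℓ : ℕ → X → U → ℝ} {φ : X → ℝ} {xs : ℕ → X} {us : ℕ → U}

theorem sum_inner_linearizedRollout {A : ℕ → X →L[ℝ] X} {B : ℕ → U →L[ℝ] X}
    {d : ℕ → U} {gx lam : ℕ → X} {gu : ℕ → U}
    (hstat : ∀ t < T, gu t + ContinuousLinearMap.adjoint (B t) (lam (t + 1)) = 0)
    (hcost : ∀ t, 1 ≤ t → t < T → lam t = gx t + ContinuousLinearMap.adjoint (A t) (lam (t + 1))) :
    ∑ t ∈ range T, (⟪gx t, linearizedRollout A B d t⟫ + ⟪gu t, d t⟫) =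
      -⟪lam T, linearizedRollout A B d T⟫ := by
  set δ := linearizedRollout A B d
  have hstep : ∀ t < T,
      ⟪gx t, δ t⟫ + ⟪gu t, d t⟫ = ⟪lam t, δ t⟫ - ⟪lam (t + 1), δ (t + 1)⟫ := by
    intro t ht
    have hδ : δ (t + 1) = A t (δ t) + B t (d t) := rfl
    rw [eq_neg_of_add_eq_zero_left (hstat t ht), hδ, inner_add_right, inner_neg_left,
      ContinuousLinearMap.adjoint_inner_left, ← ContinuousLinearMap.adjoint_inner_left (A t)]
    rcases Nat.eq_zero_or_pos t with rfl | ht0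
    · -- no costate equation is imposed at `t = 0`, and none is needed since `δ 0 = 0`
      simp [δ, linearizedRollout]
    · rw [hcost t ht0 ht, inner_add_left]
      ring
  rw [sum_congr rfl fun t ht => hstep t (mem_range.1 ht), sum_range_sub']
  simp [δ, linearizedRollout]

theorem hasDerivAt_trajectoryCost {z : ℝ → ℕ → X} {w : ℝ → ℕ → U} {d : ℕ → U} {s : ℝ}
    (hz : ∀ r, GameFeasible T x0 f (z r) (w r)) (hzs : ∀ t ≤ T, z s t = xs t) (hws : w s = us)
    (hf : ∀ t < T, DifferentiableAt ℝ (fun p : X × U => f t p.1 p.2) (xs t, us t))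
    (hℓ : ∀ t < T, DifferentiableAt ℝ (fun p : X × U => ℓ t p.1 p.2) (xs t, us t))
    (hφ : DifferentiableAt ℝ φ (xs T)) (hw : ∀ t, HasDerivAt (fun r => w r t) (d t) s) :
    HasDerivAt (fun r => trajectoryCost T ℓ φ (z r) (w r))
      (∑ t ∈ range T, (⟪gradient (fun y => ℓ t y (us t)) (xs t), stateVariation f xs us d t⟫ +
          ⟪gradient (fun v => ℓ t (xs t) v) (us t), d t⟫) +
        ⟪gradient φ (xs T), stateVariation f xs us d T⟫) s := by
  have hδ := hasDerivAt_rollout hz hzs hws hf hw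
  refine HasDerivAt.add (HasDerivAt.fun_sum fun t ht => ?_) ?_
  · have ht : t < T := mem_range.1 ht
    rw [inner_gradient_left, inner_gradient_left]
    exact (hℓ t ht).hasDerivAt_comp₂ (hδ t ht.le) (hw t) (hzs t ht.le) (congrFun hws t)
  · rw [inner_gradient_left]
    rw [← hzs T le_rfl] at hφ ⊢
    exact hφ.hasFDerivAt.comp_hasDerivAt s (hδ T le_rfl)

theorem trajectoryCost_le_of_pmp {roll : (ℕ → U) → ℕ → X}
    (hroll : ∀ u, GameFeasible T x0 f (roll u) u)
    (hconv : ConvexOn ℝ Set.univ fun u => trajectoryCost T ℓ φ (roll u) u)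
    (hfeas : GameFeasible T x0 f xs us)
    (hf : ∀ t < T, DifferentiableAt ℝ (fun p : X × U => f t p.1 p.2) (xs t, us t))
    (hℓ : ∀ t < T, DifferentiableAt ℝ (fun p : X × U => ℓ t p.1 p.2) (xs t, us t))
    (hφ : DifferentiableAt ℝ φ (xs T)) {lam : ℕ → X}
    (hstat : ∀ t < T, gradient (fun v => ℓ t (xs t) v) (us t) +
      ContinuousLinearMap.adjoint (fderiv ℝ (fun v => f t (xs t) v) (us t)) (lam (t + 1)) = 0)
    (hcost : ∀ t, 1 ≤ t → t < T → lam t = gradient (fun y => ℓ t y (us t)) (xs t) +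
      ContinuousLinearMap.adjoint (fderiv ℝ (fun y => f t y (us t)) (xs t)) (lam (t + 1)))
    (hterm : lam T = gradient φ (xs T)) {x : ℕ → X} {u : ℕ → U}
    (hxu : GameFeasible T x0 f x u) :
    trajectoryCost T ℓ φ xs us ≤ trajectoryCost T ℓ φ x u := by
  have hw : ∀ t, HasDerivAt (fun r : ℝ => AffineMap.lineMap us u r t) (u t - us t) 0 := by
    intro t
    simp only [AffineMap.pi_lineMap_apply]
    exact AffineMap.hasDerivAt_lineMap
  have hstart : ∀ t ≤ T, roll (AffineMap.lineMap us u (0 : ℝ)) t = xs t := by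
    simpa only [AffineMap.lineMap_apply_zero] using (hroll us).eq_of_le hfeas
  have hvar := hasDerivAt_trajectoryCost (fun r => hroll _) hstart
    (AffineMap.lineMap_apply_zero us u) hf hℓ hφ hw
  rw [stateVariation, sum_inner_linearizedRollout hstat hcost, ← hterm, neg_add_cancel] at hvar
  have hmin := hconv.le_of_hasDerivAt_lineMap_zero hvar
  rwa [(hroll us).trajectoryCost_eq hfeas, (hroll u).trajectoryCost_eq hxu] at hmin

end Adjoint

theorem PMPG_convex_sufficient_for_nash_general
    (M T : ℕ)
    (n mdim : Fin M → ℕ)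
    (x0 : (i : Fin M) → EuclideanSpace ℝ (Fin (n i)))
    (N : Fin M → Finset (Fin M))
    (f : (i : Fin M) → ℕ → EuclideanSpace ℝ (Fin (n i)) →
      EuclideanSpace ℝ (Fin (mdim i)) → EuclideanSpace ℝ (Fin (n i)))
    (c : (i : Fin M) → ℕ → EuclideanSpace ℝ (Fin (n i)) →
      EuclideanSpace ℝ (Fin (mdim i)) →
      ((j : N i) → EuclideanSpace ℝ (Fin (n j.1))) → ℝ)
    (h : (i : Fin M) → EuclideanSpace ℝ (Fin (n i)) →
      ((j : N i) → EuclideanSpace ℝ (Fin (n j.1))) → ℝ)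
    -- continuous differentiability of the data
    (hf : ∀ i, ∀ t < T, ContDiff ℝ 1
      (fun p : EuclideanSpace ℝ (Fin (n i)) × EuclideanSpace ℝ (Fin (mdim i)) =>
        f i t p.1 p.2))
    (hc : ∀ i, ∀ t < T, ContDiff ℝ 1
      (fun p : EuclideanSpace ℝ (Fin (n i)) × EuclideanSpace ℝ (Fin (mdim i)) ×
          ((j : N i) → EuclideanSpace ℝ (Fin (n j.1))) =>
        c i t p.1 p.2.1 p.2.2))
    (hh : ∀ i, ContDiff ℝ 1
      (fun p : EuclideanSpace ℝ (Fin (n i)) ×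
          ((j : N i) → EuclideanSpace ℝ (Fin (n j.1))) =>
        h i p.1 p.2))
    -- the candidate profile (ξ₁*, …, ξ_M*), assumed feasible
    (xs : (i : Fin M) → ℕ → EuclideanSpace ℝ (Fin (n i)))
    (us : (i : Fin M) → ℕ → EuclideanSpace ℝ (Fin (mdim i)))
    (hfeas : ∀ i, GameFeasible T (x0 i) (f i) (xs i) (us i))
    -- the rollout map: control sequence ↦ state trajectory from x0 i
    (roll : (i : Fin M) → (ℕ → EuclideanSpace ℝ (Fin (mdim i))) → ℕ →
      EuclideanSpace ℝ (Fin (n i)))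
    (hroll0 : ∀ i u, roll i u 0 = x0 i)
    (hrollrec : ∀ i u, ∀ t < T, roll i u (t + 1) = f i t (roll i u t) (u t))
    -- the reduced objective Φᵢ of robot i against the neighbors' profile trajectories
    (Φ : (i : Fin M) → (ℕ → EuclideanSpace ℝ (Fin (mdim i))) → ℝ)
    (hΦ : ∀ i u, Φ i u =
      (∑ t ∈ Finset.range T, c i t (roll i u t) (u t) (fun j => xs j.1 t))
        + h i (roll i u T) (fun j => xs j.1 T))
    -- convexity of each reduced objective
    (hconv : ∀ i, ConvexOn ℝ Set.univ (Φ i))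
    -- PMP-G conditions hold for each robot along ξᵢ* with some costate sequence
    (hPMPG : ∀ i, ∃ lam : ℕ → EuclideanSpace ℝ (Fin (n i)),
      (∀ t < T,
        gradient (fun v => c i t (xs i t) v (fun j => xs j.1 t)) (us i t)
          + (ContinuousLinearMap.adjoint
              (fderiv ℝ (fun v => f i t (xs i t) v) (us i t))) (lam (t + 1)) = 0) ∧
      (∀ t, 1 ≤ t → t < T →
        lam t = gradient (fun y => c i t y (us i t) (fun j => xs j.1 t)) (xs i t)
          + (ContinuousLinearMap.adjoint
              (fderiv ℝ (fun y => f i t y (us i t)) (xs i t))) (lam (t + 1))) ∧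
      lam T = gradient (fun y => h i y (fun j => xs j.1 T)) (xs i T)) :
    -- conclusion: the profile is a Nash equilibrium
    ∀ i, ∀ (x : ℕ → EuclideanSpace ℝ (Fin (n i)))
        (u : ℕ → EuclideanSpace ℝ (Fin (mdim i))),
      GameFeasible T (x0 i) (f i) x u →
        (∑ t ∈ Finset.range T, c i t (xs i t) (us i t) (fun j => xs j.1 t))
            + h i (xs i T) (fun j => xs j.1 T)
          ≤ (∑ t ∈ Finset.range T, c i t (x t) (u t) (fun j => xs j.1 t))
            + h i (x T) (fun j => xs j.1 T) := by
  intro i x u hxu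
  obtain ⟨lam, hstat, hcost, hterm⟩ := hPMPG i
  set ℓ := fun t y v => c i t y v fun j : N i => xs j.1 t
  set φ := fun y => h i y fun j : N i => xs j.1 T
  have hΦi : Φ i = fun u => trajectoryCost T ℓ φ (roll i u) u := funext (hΦ i)
  have hℓ : ∀ t < T,
      DifferentiableAt ℝ (fun p : _ × _ => ℓ t p.1 p.2) (xs i t, us i t) := fun t ht =>
    ((hc i t ht).differentiable one_ne_zero _).comp
      (f := fun p : _ × _ => (p.1, p.2, fun j : N i => xs j.1 t)) _ (by fun_prop)
  have hφ : DifferentiableAt ℝ φ (xs i T) :=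
    ((hh i).differentiable one_ne_zero _).comp
      (f := fun y => (y, fun j : N i => xs j.1 T)) _ (by fun_prop)
  exact trajectoryCost_le_of_pmp (fun u => ⟨hroll0 i u, hrollrec i u⟩) (hΦi ▸ hconv i) (hfeas i)
    (fun t ht => (hf i t ht).differentiable one_ne_zero _) hℓ hφ hstat hcost hterm hxu

theorem PMPG_convex_sufficient_for_nash
    (M T : ℕ) (hM : 1 ≤ M) (hT : 1 ≤ T)
    (n mdim : Fin M → ℕ)
    (x0 : (i : Fin M) → EuclideanSpace ℝ (Fin (n i)))
    (N : Fin M → Finset (Fin M))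
    (f : (i : Fin M) → ℕ → EuclideanSpace ℝ (Fin (n i)) →
      EuclideanSpace ℝ (Fin (mdim i)) → EuclideanSpace ℝ (Fin (n i)))
    (c : (i : Fin M) → ℕ → EuclideanSpace ℝ (Fin (n i)) →
      EuclideanSpace ℝ (Fin (mdim i)) →
      ((j : N i) → EuclideanSpace ℝ (Fin (n j.1))) → ℝ)
    (h : (i : Fin M) → EuclideanSpace ℝ (Fin (n i)) →
      ((j : N i) → EuclideanSpace ℝ (Fin (n j.1))) → ℝ)
    -- continuous differentiability of the data
    (hf : ∀ i, ∀ t < T, ContDiff ℝ 1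
      (fun p : EuclideanSpace ℝ (Fin (n i)) × EuclideanSpace ℝ (Fin (mdim i)) =>
        f i t p.1 p.2))
    (hc : ∀ i, ∀ t < T, ContDiff ℝ 1
      (fun p : EuclideanSpace ℝ (Fin (n i)) × EuclideanSpace ℝ (Fin (mdim i)) ×
          ((j : N i) → EuclideanSpace ℝ (Fin (n j.1))) =>
        c i t p.1 p.2.1 p.2.2))
    (hh : ∀ i, ContDiff ℝ 1
      (fun p : EuclideanSpace ℝ (Fin (n i)) ×
          ((j : N i) → EuclideanSpace ℝ (Fin (n j.1))) =>
        h i p.1 p.2))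
    -- the candidate profile (ξ₁*, …, ξ_M*), assumed feasible
    (xs : (i : Fin M) → ℕ → EuclideanSpace ℝ (Fin (n i)))
    (us : (i : Fin M) → ℕ → EuclideanSpace ℝ (Fin (mdim i)))
    (hfeas : ∀ i, GameFeasible T (x0 i) (f i) (xs i) (us i))
    -- the rollout map: control sequence ↦ state trajectory from x0 i
    (roll : (i : Fin M) → (ℕ → EuclideanSpace ℝ (Fin (mdim i))) → ℕ →
      EuclideanSpace ℝ (Fin (n i)))
    (hroll0 : ∀ i u, roll i u 0 = x0 i)
    (hrollrec : ∀ i u, ∀ t < T, roll i u (t + 1) = f i t (roll i u t) (u t))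
    -- the reduced objective Φᵢ of robot i against the neighbors' profile trajectories
    (Φ : (i : Fin M) → (ℕ → EuclideanSpace ℝ (Fin (mdim i))) → ℝ)
    (hΦ : ∀ i u, Φ i u =
      (∑ t ∈ Finset.range T, c i t (roll i u t) (u t) (fun j => xs j.1 t))
        + h i (roll i u T) (fun j => xs j.1 T))
    -- convexity of each reduced objective
    (hconv : ∀ i, ConvexOn ℝ Set.univ (Φ i))
    -- PMP-G conditions hold for each robot along ξᵢ* with some costate sequence
    (hPMPG : ∀ i, ∃ lam : ℕ → EuclideanSpace ℝ (Fin (n i)),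
      (∀ t < T,
        gradient (fun v => c i t (xs i t) v (fun j => xs j.1 t)) (us i t)
          + (ContinuousLinearMap.adjoint
              (fderiv ℝ (fun v => f i t (xs i t) v) (us i t))) (lam (t + 1)) = 0) ∧
      (∀ t, 1 ≤ t → t < T →
        lam t = gradient (fun y => c i t y (us i t) (fun j => xs j.1 t)) (xs i t)
          + (ContinuousLinearMap.adjoint
              (fderiv ℝ (fun y => f i t y (us i t)) (xs i t))) (lam (t + 1))) ∧
      lam T = gradient (fun y => h i y (fun j => xs j.1 T)) (xs i T)) :
    -- conclusion: the profile is a Nash equilibrium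
    ∀ i, ∀ (x : ℕ → EuclideanSpace ℝ (Fin (n i)))
        (u : ℕ → EuclideanSpace ℝ (Fin (mdim i))),
      GameFeasible T (x0 i) (f i) x u →
        (∑ t ∈ Finset.range T, c i t (xs i t) (us i t) (fun j => xs j.1 t))
            + h i (xs i T) (fun j => xs j.1 T)
          ≤ (∑ t ∈ Finset.range T, c i t (x t) (u t) (fun j => xs j.1 t))
            + h i (x T) (fun j => xs j.1 T) :=
  PMPG_convex_sufficient_for_nash_general M T n mdim x0 N f c h hf hc hh xs us hfeas roll hroll0
    hrollrec Φ hΦ hconv hPMPG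
end
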